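/- arXiv:1810.10580 — 2 statements merged into one kernel-verified Lean document; each statement's English description precedes it below -/
import Mathlib

section
/- Let R be a commutative Artinian ring with unit and let G be an abelian group in which every element has finite order (equivalently, G is locally finite abelian), such that the order of every element of G is invertible in R/J(R), where J(R) is the Jacobson radical of R. Then the Jacobson radical of the group algebra RG equals the ideal J(R)·RG generated by J(R), and this ideal is nilpotent. -/
/-!
Over a field `k`, every element `y` of `k[G]` lies in `k[H]` for the finite subgroup `H` generated
by its support. Since `G` is torsion, `k[G]` is integral over `k[H]`, so an element of `k[H]` that
becomes a unit in `k[G]` is already a unit in `k[H]`; hence `y ∈ J(k[G])` forces `y ∈ J(k[H])`,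
which vanishes by Maschke's theorem because `|H|` divides a power of the exponent of `H`, an
element order. For general `R`, reducing modulo each maximal ideal `m` shows that the coefficients
of an element of `J(R[G])` lie in every `m`, i.e. in `J(R)`; conversely `J(R)·R[G]` is nilpotent
because `J(R)` is, so it lies in `J(R[G])`.
-/

lemma Ideal.comap_jacobson_bot_le_of_isLocalHom {A B : Type*} [CommRing A] [CommRing B]
    (f : A →+* B) [IsLocalHom f] :
    (⊥ : Ideal B).jacobson.comap f ≤ (⊥ : Ideal A).jacobson := fun x hx =>
  Ideal.mem_jacobson_bot.mpr fun y =>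
    (isUnit_map_iff f _).mp (by simpa using Ideal.mem_jacobson_bot.mp hx (f y))

lemma Ideal.le_jacobson_bot_of_isNilpotent {A : Type*} [CommRing A] {I : Ideal A}
    (hI : IsNilpotent I) : I ≤ (⊥ : Ideal A).jacobson := fun x hx =>
  have ⟨n, hn⟩ := hI
  Ideal.radical_le_jacobson ⟨n, by simpa [hn] using Ideal.pow_mem_pow hx n⟩

lemma isUnit_natCard_of_forall_isUnit_orderOf {k H : Type*} [CommSemiring k] [CommGroup H]
    [Finite H] (h : ∀ g : H, IsUnit (orderOf g : k)) : IsUnit (Nat.card H : k) := by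
  obtain ⟨g, hg⟩ := Monoid.exists_orderOf_eq_exponent (Monoid.ExponentExists.of_finite (G := H))
  refine isUnit_of_dvd_unit ?_ ((hg ▸ h g).pow (Group.rank H))
  exact_mod_cast Nat.cast_dvd_cast (card_dvd_exponent_pow_rank H)

namespace MonoidAlgebra

lemma mem_map_algebraMap_of_forall_coeff_mem {R G : Type*} [CommSemiring R] [Monoid G]
    {I : Ideal R} {x : MonoidAlgebra R G} (hx : ∀ g, x.coeff g ∈ I) :
    x ∈ I.map (algebraMap R (MonoidAlgebra R G)) := by
  rw [← sum_coeff_single x, Finsupp.sum]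
  refine Ideal.sum_mem _ fun g _ => ?_
  rw [← mul_one (x.coeff g), ← smul_eq_mul, ← smul_single, Algebra.smul_def, Algebra.commutes]
  exact Ideal.mul_mem_left _ _ (Ideal.mem_map_of_mem _ (hx g))

lemma isIntegral_of_isOfFinOrder {k G : Type*} [CommRing k] [Monoid G] {g : G}
    (hg : IsOfFinOrder g) : IsIntegral k (of k G g) :=
  .of_pow hg.orderOf_pos <| by rw [← map_pow, pow_orderOf_eq_one, map_one]; exact isIntegral_one

lemma isIntegral_of_isMulTorsion {k G : Type*} [CommRing k] [CommMonoid G]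
    (hG : IsMulTorsion G) : Algebra.IsIntegral k (MonoidAlgebra k G) :=
  ⟨fun x => Algebra.adjoin_le (S := integralClosure k _)
    (by rintro _ ⟨g, -, rfl⟩; exact isIntegral_of_isOfFinOrder (hG g)) (mem_adjoin_support x)⟩

lemma isLocalHom_mapDomainRingHom_subtype {k G : Type*} [CommRing k] [CommGroup G]
    (hG : IsMulTorsion G) (H : Subgroup G) :
    IsLocalHom (mapDomainRingHom k H.subtype) := by
  have := isIntegral_of_isMulTorsion (k := k) hG
  have hcomp : (mapDomainRingHom k H.subtype).comp (algebraMap k (MonoidAlgebra k H)) =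
      algebraMap k (MonoidAlgebra k G) := by
    ext; simp
  refine RingHom.IsIntegral.isLocalHom (.tower_top (algebraMap k (MonoidAlgebra k H)) _ ?_)
    (mapDomain_injective H.subtype_injective)
  rw [hcomp]
  exact algebraMap_isIntegral_iff.mpr inferInstance

lemma jacobson_bot_eq_bot_of_finite {k H : Type*} [Field k] [Group H] [Finite H]
    (h : IsUnit (Nat.card H : k)) : (⊥ : Ideal (MonoidAlgebra k H)).jacobson = ⊥ := by
  have : NeZero (Nat.card H : k) := ⟨h.ne_zero⟩
  rw [Ideal.jacobson_bot, IsSemisimpleRing.jacobson_eq_bot]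

theorem jacobson_bot_eq_bot_of_isMulTorsion {k G : Type*} [Field k] [CommGroup G]
    (hG : IsMulTorsion G) (hord : ∀ g : G, IsUnit (orderOf g : k)) :
    (⊥ : Ideal (MonoidAlgebra k G)).jacobson = ⊥ := by
  refine eq_bot_iff.mpr fun y hy => ?_
  let H := Subgroup.closure (y.coeff.support : Set G)
  have : Finite H := CommGroup.finite_of_fg_isMulTorsion H (hG.subgroup H)
  have hH : ∀ h : H, IsUnit (orderOf h : k) := fun h => Subgroup.orderOf_coe h ▸ hord h
  obtain ⟨y', hy'y⟩ : ∃ y', mapDomainRingHom k H.subtype y' = y :=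
    ⟨_, mapDomain_comapDomain (fun g hg => ⟨⟨g, Subgroup.subset_closure hg⟩, rfl⟩)
      H.subtype_injective⟩
  have := isLocalHom_mapDomainRingHom_subtype (k := k) hG H
  have hy' : y' ∈ (⊥ : Ideal (MonoidAlgebra k H)).jacobson :=
    Ideal.comap_jacobson_bot_le_of_isLocalHom _ (hy'y ▸ hy)
  rw [jacobson_bot_eq_bot_of_finite (isUnit_natCard_of_forall_isUnit_orderOf hH),
    Ideal.mem_bot] at hy'
  rw [← hy'y, hy', map_zero]
  exact Submodule.zero_mem _

theorem jacobson_bot_le_map_jacobson {R G : Type*} [CommRing R] [CommGroup G]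
    (hG : IsMulTorsion G)
    (hord : ∀ g : G, IsUnit (orderOf g : R ⧸ (⊥ : Ideal R).jacobson)) :
    (⊥ : Ideal (MonoidAlgebra R G)).jacobson ≤
      (⊥ : Ideal R).jacobson.map (algebraMap R (MonoidAlgebra R G)) := by
  intro x hx
  refine mem_map_algebraMap_of_forall_coeff_mem fun g => Ideal.mem_sInf.mpr ?_
  rintro m ⟨-, hm⟩
  let := Ideal.Quotient.field m
  let π := mapRingHom G (Ideal.Quotient.mk m)
  have hπx : π x ∈ (⊥ : Ideal (MonoidAlgebra (R ⧸ m) G)).jacobson :=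
    (Ideal.comap_jacobson_of_surjective (map_surjective _ Ideal.Quotient.mk_surjective)).ge
      (Ideal.jacobson_mono bot_le hx)
  have hJm : (⊥ : Ideal R).jacobson ≤ m := sInf_le ⟨bot_le, hm⟩
  have hord_m : ∀ g : G, IsUnit (orderOf g : R ⧸ m) := fun g => by
    simpa using (hord g).map (Ideal.Quotient.factor hJm)
  rw [jacobson_bot_eq_bot_of_isMulTorsion hG hord_m, Ideal.mem_bot] at hπx
  exact Ideal.Quotient.eq_zero_iff_mem.mp (by simpa [π] using congr(($hπx).coeff g))

end MonoidAlgebra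

/-- Let `R` be a commutative Artinian ring and `G` an abelian group in which every
element has finite order, such that the order of every element of `G` is invertible
in `R/J(R)`.  Then the Jacobson radical of the group algebra `RG` equals the ideal
generated by `J(R)`, and this ideal is nilpotent. -/
theorem jacobson_monoidAlgebra_eq_map_jacobson
    (R : Type*) [CommRing R] [IsArtinianRing R]
    (G : Type*) [CommGroup G]
    (hfin : ∀ g : G, IsOfFinOrder g)
    (hinv : ∀ g : G, IsUnit ((orderOf g : ℕ) : R ⧸ (⊥ : Ideal R).jacobson)) :
    (⊥ : Ideal (MonoidAlgebra R G)).jacobson =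
        Ideal.map (algebraMap R (MonoidAlgebra R G)) (⊥ : Ideal R).jacobson ∧
      ∃ n : ℕ, 0 < n ∧
        (Ideal.map (algebraMap R (MonoidAlgebra R G)) (⊥ : Ideal R).jacobson) ^ n = ⊥ := by
  obtain ⟨n, hn⟩ := IsArtinianRing.isNilpotent_jacobson_bot (R := R)
  have hnil : ((⊥ : Ideal R).jacobson.map (algebraMap R (MonoidAlgebra R G))) ^ (n + 1) = ⊥ := by
    rw [← Ideal.map_pow, pow_succ, hn, Ideal.zero_eq_bot, Ideal.bot_mul, Ideal.map_bot]
  exact ⟨le_antisymm (MonoidAlgebra.jacobson_bot_le_map_jacobson hfin hinv)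
    (Ideal.le_jacobson_bot_of_isNilpotent ⟨n + 1, hnil⟩), n + 1, n.succ_pos, hnil⟩
end

section
/- Let R be a commutative Artinian ring with unit and let G be an abelian group in which every element has finite order (equivalently, G is locally finite abelian), such that the order of every element of G is invertible in R/J(R), where J(R) is the Jacobson radical of R. Then the quotient RG/J(RG) of the group algebra RG by its Jacobson radical is a von Neumann regular ring. -/
/-! Every `f ∈ R[G]` lives in `R[H]` for the subgroup `H` generated by its support, which is
finite since `G` is torsion abelian; `R[H]` is a finite `R`-algebra, hence Artinian. In an Artinian
ring the chain `(aⁿ)` stabilises, `aⁿ = aⁿ⁺¹y`, so `aya - a = a(ay - 1)` is nilpotent. Nilpotents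
die modulo the Jacobson radical. -/

theorem IsArtinianRing.exists_isNilpotent_mul_mul_sub {A : Type*} [CommRing A]
    [IsArtinianRing A] (a : A) : ∃ x : A, IsNilpotent (a * x * a - a) := by
  obtain ⟨n, y, hy⟩ := IsArtinian.exists_pow_succ_smul_dvd a (1 : A)
  have hker : a ^ n * (a * y - 1) = 0 := by
    rw [smul_eq_mul, smul_eq_mul, mul_one, pow_succ] at hy
    rw [mul_sub, mul_one, ← mul_assoc, hy, sub_self]
  refine ⟨y, n + 1, ?_⟩
  rw [show a * y * a - a = a * (a * y - 1) by ring]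
  generalize a * y - 1 = b at hker ⊢
  calc (a * b) ^ (n + 1) = a ^ n * b * (a * b ^ n) := by ring
    _ = 0 := by rw [hker, zero_mul]

theorem Ideal.Quotient.mk_mul_mul_eq_of_isNilpotent {S : Type*} [CommRing S] {I : Ideal S}
    (hI : I.IsRadical) {a x : S} (h : IsNilpotent (a * x * a - a)) :
    mk I a * mk I x * mk I a = mk I a := by
  have := (Ideal.isRadical_iff_quotient_reduced I).mp hI
  rw [← sub_eq_zero, ← map_mul, ← map_mul, ← map_sub]
  exact (h.map (mk I)).eq_zero

theorem MonoidAlgebra.exists_mapDomain_subtype_eq {R M : Type*} [Semiring R] [Monoid M]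
    (S : Submonoid M) {f : MonoidAlgebra R M} (hf : ↑f.coeff.support ⊆ (S : Set M)) :
    ∃ g : MonoidAlgebra R S, MonoidAlgebra.mapDomainRingHom R S.subtype g = f := by
  obtain ⟨g, hg⟩ :=
    (Finsupp.mem_range_mapDomain_iff (f := Subtype.val) Subtype.val_injective f.coeff).mpr fun m hm =>
      Finsupp.notMem_support_iff.mp fun hmf => hm ⟨⟨m, hf hmf⟩, rfl⟩
  exact ⟨.ofCoeff g, by ext m; exact DFunLike.congr_fun hg m⟩

instance MonoidAlgebra.isArtinianRing_of_finite {R G : Type*} [Ring R] [IsArtinianRing R]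
    [Monoid G] [Finite G] :
    IsArtinianRing (MonoidAlgebra R G) :=
  IsArtinianRing.of_finite R _

theorem monoidAlgebra_quotient_jacobson_vonNeumannRegular_general
    (R : Type*) [CommRing R] [IsArtinianRing R]
    (G : Type*) [CommGroup G]
    (hfin : ∀ g : G, IsOfFinOrder g) :
    ∀ a : MonoidAlgebra R G ⧸ (⊥ : Ideal (MonoidAlgebra R G)).jacobson,
      ∃ x : MonoidAlgebra R G ⧸ (⊥ : Ideal (MonoidAlgebra R G)).jacobson,
        a * x * a = a := by
  intro a
  obtain ⟨f, rfl⟩ := Ideal.Quotient.mk_surjective a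
  let H := Subgroup.closure (f.coeff.support : Set G)
  have : Finite H := CommGroup.finite_of_fg_isMulTorsion H (IsMulTorsion.subgroup hfin H)
  let φ := MonoidAlgebra.mapDomainRingHom R H.subtype
  obtain ⟨g, hg⟩ : ∃ g, φ g = f :=
    MonoidAlgebra.exists_mapDomain_subtype_eq H.toSubmonoid Subgroup.subset_closure
  obtain ⟨y, hy⟩ := IsArtinianRing.exists_isNilpotent_mul_mul_sub g
  have hnil : IsNilpotent (f * φ y * f - f) := by
    simpa only [← hg, map_mul, map_sub] using hy.map φ
  exact ⟨_, Ideal.Quotient.mk_mul_mul_eq_of_isNilpotent (⊥ : Ideal _).isRadical_jacobson hnil⟩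

/-- Let `R` be a commutative Artinian ring and `G` an abelian group in which every
element has finite order, such that the order of every element of `G` is invertible
in `R/J(R)`.  Then the quotient of the group algebra `RG` by its Jacobson radical
is a von Neumann regular ring. -/
theorem monoidAlgebra_quotient_jacobson_vonNeumannRegular
    (R : Type*) [CommRing R] [IsArtinianRing R]
    (G : Type*) [CommGroup G]
    (hfin : ∀ g : G, IsOfFinOrder g)
    (hinv : ∀ g : G, IsUnit ((orderOf g : ℕ) : R ⧸ (⊥ : Ideal R).jacobson)) :
    ∀ a : MonoidAlgebra R G ⧸ (⊥ : Ideal (MonoidAlgebra R G)).jacobson,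
      ∃ x : MonoidAlgebra R G ⧸ (⊥ : Ideal (MonoidAlgebra R G)).jacobson,
        a * x * a = a :=
  monoidAlgebra_quotient_jacobson_vonNeumannRegular_general R G hfin
end
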